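/- Monotonicity gap identity: for every integer L ≥ 0, H_L − H_{L+1} = E_{ξ_0,…,ξ_{L+1} iid ∼ μ} [ ∫ π̄_{ξ_{0:L}}(a) · log( π̄_{ξ_{0:L}}(a) / π̄_{ξ_{0:L+1}}(a) ) dν(a) ], i.e., the decrease from H_L to H_{L+1} equals the expected Kullback–Leibler divergence from the (L+1)-component mixture π̄_{ξ_{0:L}} to the (L+2)-component mixture π̄_{ξ_{0:L+1}}; consequently H_L ≥ H_{L+1}. -/
import Mathlib


open MeasureTheory Filter

/-- The uniform mixture density over `L+1` components. -/
noncomputable def mixDensity {Ξ A : Type*} (f : Ξ → A → ℝ) {L : ℕ}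
    (ξs : Fin (L + 1) → Ξ) (a : A) : ℝ :=
  (1 / (L + 1 : ℝ)) * ∑ ℓ, f (ξs ℓ) a

/-- `H_L`: the semi-implicit entropy surrogate with `L+1` iid mixing variables. -/
noncomputable def semiImplicitH {Ξ A : Type*} [MeasurableSpace Ξ] [MeasurableSpace A]
    (μ : Measure Ξ) (ν : Measure A) (f : Ξ → A → ℝ) (L : ℕ) : ℝ :=
  ∫ ξs : Fin (L + 1) → Ξ,
    (∫ a, f (ξs 0) a * Real.log (mixDensity f ξs a) ∂ν) ∂(Measure.pi fun _ => μ)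

section Helpers
variable {Ξ A : Type*} [MeasurableSpace Ξ] [MeasurableSpace A]
  {μ : Measure Ξ} [IsProbabilityMeasure μ] {ν : Measure A} [SigmaFinite ν]
  {f : Ξ → A → ℝ}

private lemma mp_integral {α β : Type*} [MeasurableSpace α] [MeasurableSpace β]
    {μa : Measure α} {μb : Measure β} {T : α → β} (hT : MeasurePreserving T μa μb)
    {g : β → ℝ} (hg : AEStronglyMeasurable g μb) :
    ∫ x, g (T x) ∂μa = ∫ y, g y ∂μb := by
  rw [← hT.map_eq] at hg
  rw [← hT.map_eq, integral_map hT.measurable.aemeasurable hg]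

private lemma mp_perm (n : ℕ) (σ : Equiv.Perm (Fin n)) :
    MeasurePreserving (fun ξs : Fin n → Ξ => ξs ∘ σ)
      (Measure.pi fun _ => μ) (Measure.pi fun _ => μ) := by
  have h := measurePreserving_piCongrLeft (fun _ : Fin n => μ) σ.symm
  have he : ⇑(MeasurableEquiv.piCongrLeft (fun _ : Fin n => Ξ) σ.symm)
      = fun ξs : Fin n → Ξ => ξs ∘ σ := by
    funext ξs
    funext b
    rw [MeasurableEquiv.coe_piCongrLeft, Equiv.piCongrLeft_apply_eq_cast]
    simp
  rwa [he] at h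

private lemma mp_cast (L : ℕ) :
    MeasurePreserving (fun ξs : Fin (L + 2) → Ξ => fun ℓ : Fin (L + 1) => ξs ℓ.castSucc)
      (Measure.pi fun _ => μ) (Measure.pi fun _ => μ) := by
  have h1 := measurePreserving_piFinSuccAbove (fun _ : Fin (L + 2) => μ) (Fin.last (L + 1))
  have h2 : MeasurePreserving (Prod.snd : Ξ × (Fin (L + 1) → Ξ) → _)
      (μ.prod (Measure.pi fun _ => μ)) (Measure.pi fun _ => μ) :=
    ⟨measurable_snd, by simp⟩
  have h := h2.comp h1
  have he : (Prod.snd ∘ ⇑(MeasurableEquiv.piFinSuccAbove (fun _ : Fin (L + 2) => Ξ) (Fin.last (L + 1))))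
      = fun ξs : Fin (L + 2) → Ξ => fun ℓ : Fin (L + 1) => ξs ℓ.castSucc := by
    funext ξs
    funext ℓ
    simp [MeasurableEquiv.piFinSuccAbove, Fin.removeNth, Fin.succAbove_last, Fin.init]
  rwa [he] at h

/-- Pullback along permutation of coordinates, prod with identity on `A`. -/
private lemma mp_permProd (n : ℕ) (σ : Equiv.Perm (Fin n)) :
    MeasurePreserving (fun q : (Fin n → Ξ) × A => (q.1 ∘ σ, q.2))
      ((Measure.pi fun _ => μ).prod ν) ((Measure.pi fun _ => μ).prod ν) := by
  have hfun : (fun q : (Fin n → Ξ) × A => (q.1 ∘ σ, q.2))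
      = Prod.map (fun ξs : Fin n → Ξ => ξs ∘ σ) id := by
    funext q; cases q; rfl
  rw [hfun]
  exact (mp_perm n σ).prod (MeasurePreserving.id ν)

private lemma mp_castProd (L : ℕ) :
    MeasurePreserving
      (fun q : (Fin (L + 2) → Ξ) × A => ((fun ℓ : Fin (L + 1) => q.1 ℓ.castSucc), q.2))
      ((Measure.pi fun _ => μ).prod ν) ((Measure.pi fun _ => μ).prod ν) := by
  have hfun : (fun q : (Fin (L + 2) → Ξ) × A => ((fun ℓ : Fin (L + 1) => q.1 ℓ.castSucc), q.2))
      = Prod.map (fun ξs : Fin (L + 2) → Ξ => fun ℓ : Fin (L + 1) => ξs ℓ.castSucc) id := by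
    funext q; cases q; rfl
  rw [hfun]
  exact (mp_cast L).prod (MeasurePreserving.id ν)

private lemma coord_meas (hf_meas : Measurable (Function.uncurry f)) {n : ℕ} (j : Fin n) :
    Measurable (fun q : (Fin n → Ξ) × A => f (q.1 j) q.2) := by
  have h : Measurable ((Function.uncurry f) ∘ (fun q : (Fin n → Ξ) × A => (q.1 j, q.2))) :=
    hf_meas.comp (((measurable_pi_apply j).comp measurable_fst).prodMk measurable_snd)
  exact h

private lemma mix_meas (hf_meas : Measurable (Function.uncurry f)) (L : ℕ) :
    Measurable (fun q : (Fin (L + 1) → Ξ) × A => mixDensity f q.1 q.2) := by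
  unfold mixDensity
  exact measurable_const.mul (Finset.measurable_sum _ fun ℓ _ => coord_meas hf_meas ℓ)

private lemma mix_nonneg (hf_nonneg : ∀ ξ a, 0 ≤ f ξ a) {L : ℕ} (ξs : Fin (L + 1) → Ξ) (a : A) :
    0 ≤ mixDensity f ξs a :=
  mul_nonneg (by positivity) (Finset.sum_nonneg fun ℓ _ => hf_nonneg _ _)

/-- Integrability from the given absolute-value integrability hypotheses. -/
private lemma integrable_of_abs {α : Type*} [MeasurableSpace α] {m : Measure α} {g h : α → ℝ}
    (hmeas : AEStronglyMeasurable (fun x => g x * Real.log (h x)) m)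
    (hint : Integrable (fun x => g x * |Real.log (h x)|) m) (hg : ∀ x, 0 ≤ g x) :
    Integrable (fun x => g x * Real.log (h x)) m :=
  hint.mono' hmeas (ae_of_all _ fun x => by
    rw [Real.norm_eq_abs, abs_mul, abs_of_nonneg (hg x)])

/-- Each coordinate density is integrable on the product with integral one. -/
private lemma coord_int (hf_nonneg : ∀ ξ a, 0 ≤ f ξ a)
    (hf_meas : Measurable (Function.uncurry f))
    (hf_dens : ∀ᵐ ξ ∂μ, ∫ a, f ξ a ∂ν = 1) (n : ℕ) (j : Fin n) :
    Integrable (fun q : (Fin n → Ξ) × A => f (q.1 j) q.2) ((Measure.pi fun _ => μ).prod ν) ∧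
      ∫ q : (Fin n → Ξ) × A, f (q.1 j) q.2 ∂((Measure.pi fun _ => μ).prod ν) = 1 := by
  have hs : ∀ᵐ ξ ∂μ, Integrable (f ξ) ν ∧ ∫ a, f ξ a ∂ν = 1 := by
    filter_upwards [hf_dens] with ξ hξ
    have hint : Integrable (f ξ) ν := by
      by_contra hc
      rw [integral_undef hc] at hξ
      norm_num at hξ
    exact ⟨hint, hξ⟩
  have hae : ∀ᵐ ξs ∂(Measure.pi fun _ : Fin n => μ),
      Integrable (f (ξs j)) ν ∧ ∫ a, f (ξs j) a ∂ν = 1 := by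
    rw [ae_iff] at hs ⊢
    have h := Measure.pi_eval_preimage_null (μ := fun _ : Fin n => μ) (i := j) hs
    exact h
  have hmeas := coord_meas (f := f) hf_meas (n := n) j
  have hlint : ∀ᵐ ξs ∂(Measure.pi fun _ : Fin n => μ),
      ∫⁻ a, ENNReal.ofReal (f (ξs j) a) ∂ν = 1 := by
    filter_upwards [hae] with ξs h
    rw [← ofReal_integral_eq_lintegral_ofReal h.1 (ae_of_all _ fun a => hf_nonneg _ _), h.2,
      ENNReal.ofReal_one]
  have hint : Integrable (fun q : (Fin n → Ξ) × A => f (q.1 j) q.2)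
      ((Measure.pi fun _ => μ).prod ν) := by
    refine ⟨hmeas.aestronglyMeasurable, ?_⟩
    rw [hasFiniteIntegral_iff_ofReal (ae_of_all _ fun q => hf_nonneg _ _),
      lintegral_prod _ (hmeas.ennreal_ofReal).aemeasurable]
    rw [lintegral_congr_ae hlint]
    simp
  refine ⟨hint, ?_⟩
  rw [integral_prod _ hint]
  have h2 : (fun ξs : Fin n → Ξ => ∫ a, f (ξs j) a ∂ν)
      =ᵐ[Measure.pi fun _ : Fin n => μ] fun _ => (1 : ℝ) := hae.mono fun ξs h => h.2
  rw [integral_congr_ae h2]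
  simp

/-- Change of variables by a coordinate permutation on the product space. -/
private lemma perm_step {n : ℕ} (σ : Equiv.Perm (Fin n)) {h : (Fin n → Ξ) × A → ℝ}
    (hmeas : Measurable h) (hint : Integrable h ((Measure.pi fun _ => μ).prod ν)) :
    Integrable (fun q : (Fin n → Ξ) × A => h (q.1 ∘ σ, q.2)) ((Measure.pi fun _ => μ).prod ν) ∧
      ∫ q : (Fin n → Ξ) × A, h (q.1 ∘ σ, q.2) ∂((Measure.pi fun _ => μ).prod ν)
        = ∫ q, h q ∂((Measure.pi fun _ => μ).prod ν) := by
  have hT := mp_permProd (μ := μ) (ν := ν) n σ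
  refine ⟨?_, mp_integral hT hmeas.aestronglyMeasurable⟩
  exact (hT.integrable_comp hmeas.aestronglyMeasurable).2 hint

/-- Change of variables by dropping the last coordinate. -/
private lemma cast_step (L : ℕ) {h : (Fin (L + 1) → Ξ) × A → ℝ}
    (hmeas : Measurable h) (hint : Integrable h ((Measure.pi fun _ => μ).prod ν)) :
    Integrable (fun q : (Fin (L + 2) → Ξ) × A => h ((fun ℓ : Fin (L + 1) => q.1 ℓ.castSucc), q.2))
        ((Measure.pi fun _ => μ).prod ν) ∧
      ∫ q : (Fin (L + 2) → Ξ) × A, h ((fun ℓ : Fin (L + 1) => q.1 ℓ.castSucc), q.2)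
          ∂((Measure.pi fun _ => μ).prod ν)
        = ∫ q, h q ∂((Measure.pi fun _ => μ).prod ν) := by
  have hT := mp_castProd (μ := μ) (ν := ν) L
  refine ⟨?_, mp_integral hT hmeas.aestronglyMeasurable⟩
  exact (hT.integrable_comp hmeas.aestronglyMeasurable).2 hint

end Helpers

/-- monotonicity gap identity.  The decrease `H_L − H_{L+1}` equals
the expected Kullback–Leibler divergence from the `(L+1)`-component mixture
`π̄_{ξ_{0:L}}` to the `(L+2)`-component mixture `π̄_{ξ_{0:L+1}}`; consequently
`H_L ≥ H_{L+1}`. -/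
theorem semiImplicitH_succ_gap_eq_expected_KL
    {Ξ A : Type*} [MeasurableSpace Ξ] [MeasurableSpace A]
    (μ : Measure Ξ) [IsProbabilityMeasure μ]
    (ν : Measure A) [SigmaFinite ν]
    (f : Ξ → A → ℝ)
    (hf_nonneg : ∀ ξ a, 0 ≤ f ξ a)
    (hf_meas : Measurable (Function.uncurry f))
    (hf_dens : ∀ᵐ ξ ∂μ, ∫ a, f ξ a ∂ν = 1)
    (hH_int : ∀ L : ℕ, Integrable
      (fun q : (Fin (L + 1) → Ξ) × A =>
        f (q.1 0) q.2 * |Real.log (mixDensity f q.1 q.2)|)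
      ((Measure.pi fun _ => μ).prod ν))
    (hKL_int : ∀ L : ℕ, Integrable
      (fun q : (Fin (L + 2) → Ξ) × A =>
        mixDensity f (fun ℓ : Fin (L + 1) => q.1 ℓ.castSucc) q.2 *
          |Real.log (mixDensity f (fun ℓ : Fin (L + 1) => q.1 ℓ.castSucc) q.2 /
            mixDensity f q.1 q.2)|)
      ((Measure.pi fun _ => μ).prod ν)) :
    ∀ L : ℕ,
      semiImplicitH μ ν f L - semiImplicitH μ ν f (L + 1) =
        (∫ ξs : Fin (L + 2) → Ξ,
          (∫ a, mixDensity f (fun ℓ : Fin (L + 1) => ξs ℓ.castSucc) a *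
            Real.log (mixDensity f (fun ℓ : Fin (L + 1) => ξs ℓ.castSucc) a /
              mixDensity f ξs a) ∂ν)
          ∂(Measure.pi fun _ => μ)) ∧
      semiImplicitH μ ν f (L + 1) ≤ semiImplicitH μ ν f L := by
  intro L
  classical
  have hL1 : ((L : ℝ) + 1) ≠ 0 := by positivity
  -- measurability
  have hmix1 : Measurable (fun q : (Fin (L + 1) → Ξ) × A => mixDensity f q.1 q.2) :=
    mix_meas hf_meas L
  have hmix2 : Measurable (fun q : (Fin (L + 2) → Ξ) × A => mixDensity f q.1 q.2) :=
    mix_meas hf_meas (L + 1)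
  have hmixC : Measurable (fun q : (Fin (L + 2) → Ξ) × A =>
      mixDensity f (fun ℓ : Fin (L + 1) => q.1 ℓ.castSucc) q.2) := by
    have h : Measurable ((fun q : (Fin (L + 1) → Ξ) × A => mixDensity f q.1 q.2) ∘
        (fun q : (Fin (L + 2) → Ξ) × A => ((fun ℓ : Fin (L + 1) => q.1 ℓ.castSucc), q.2))) :=
      hmix1.comp ((measurable_pi_lambda _ fun ℓ =>
        (measurable_pi_apply ℓ.castSucc).comp measurable_fst).prodMk measurable_snd)
    exact h
  have hmixC_nonneg : ∀ q : (Fin (L + 2) → Ξ) × A,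
      0 ≤ mixDensity f (fun ℓ : Fin (L + 1) => q.1 ℓ.castSucc) q.2 :=
    fun q => mix_nonneg hf_nonneg _ _
  -- integrands of H_L and H_{L+1}
  have hgL_meas : Measurable (fun q : (Fin (L + 1) → Ξ) × A =>
      f (q.1 0) q.2 * Real.log (mixDensity f q.1 q.2)) :=
    (coord_meas hf_meas 0).mul (Real.measurable_log.comp hmix1)
  have hgL_int : Integrable (fun q : (Fin (L + 1) → Ξ) × A =>
      f (q.1 0) q.2 * Real.log (mixDensity f q.1 q.2)) ((Measure.pi fun _ => μ).prod ν) :=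
    integrable_of_abs hgL_meas.aestronglyMeasurable (hH_int L) (fun q => hf_nonneg _ _)
  have hgS_meas : Measurable (fun q : (Fin (L + 2) → Ξ) × A =>
      f (q.1 0) q.2 * Real.log (mixDensity f q.1 q.2)) :=
    (coord_meas hf_meas 0).mul (Real.measurable_log.comp hmix2)
  have hgS_int : Integrable (fun q : (Fin (L + 2) → Ξ) × A =>
      f (q.1 0) q.2 * Real.log (mixDensity f q.1 q.2)) ((Measure.pi fun _ => μ).prod ν) :=
    integrable_of_abs hgS_meas.aestronglyMeasurable (hH_int (L + 1)) (fun q => hf_nonneg _ _)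
  -- lift the H_L integrand to level L+2
  obtain ⟨hgLR_int0, hgLR_eq0⟩ := cast_step L hgL_meas hgL_int
  have hfix : ∀ q : (Fin (L + 2) → Ξ) × A,
      f (q.1 ((0 : Fin (L + 1)).castSucc)) q.2 *
          Real.log (mixDensity f (fun ℓ : Fin (L + 1) => q.1 ℓ.castSucc) q.2)
        = f (q.1 0) q.2 *
          Real.log (mixDensity f (fun ℓ : Fin (L + 1) => q.1 ℓ.castSucc) q.2) := by
    intro q
    rw [Fin.castSucc_zero]
  have hgLR_meas : Measurable (fun q : (Fin (L + 2) → Ξ) × A =>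
      f (q.1 0) q.2 * Real.log (mixDensity f (fun ℓ : Fin (L + 1) => q.1 ℓ.castSucc) q.2)) :=
    (coord_meas hf_meas 0).mul (Real.measurable_log.comp hmixC)
  have hgLR_int : Integrable (fun q : (Fin (L + 2) → Ξ) × A =>
      f (q.1 0) q.2 * Real.log (mixDensity f (fun ℓ : Fin (L + 1) => q.1 ℓ.castSucc) q.2))
      ((Measure.pi fun _ => μ).prod ν) :=
    hgLR_int0.congr (ae_of_all _ hfix)
  have hgLR_eq : ∫ q : (Fin (L + 2) → Ξ) × A,
        f (q.1 0) q.2 * Real.log (mixDensity f (fun ℓ : Fin (L + 1) => q.1 ℓ.castSucc) q.2)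
        ∂((Measure.pi fun _ => μ).prod ν)
      = ∫ q : (Fin (L + 1) → Ξ) × A, f (q.1 0) q.2 * Real.log (mixDensity f q.1 q.2)
        ∂((Measure.pi fun _ => μ).prod ν) := by
    rw [← hgLR_eq0]
    exact integral_congr_ae (ae_of_all _ fun q => (hfix q).symm)
  -- symmetry: full-mixture side
  have hsymF : ∀ k : Fin (L + 1),
      Integrable (fun q : (Fin (L + 2) → Ξ) × A =>
        f (q.1 k.castSucc) q.2 * Real.log (mixDensity f q.1 q.2))
        ((Measure.pi fun _ => μ).prod ν) ∧
      ∫ q : (Fin (L + 2) → Ξ) × A,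
          f (q.1 k.castSucc) q.2 * Real.log (mixDensity f q.1 q.2)
          ∂((Measure.pi fun _ => μ).prod ν)
        = ∫ q : (Fin (L + 2) → Ξ) × A,
          f (q.1 0) q.2 * Real.log (mixDensity f q.1 q.2)
          ∂((Measure.pi fun _ => μ).prod ν) := by
    intro k
    set σ : Equiv.Perm (Fin (L + 2)) := Equiv.swap 0 k.castSucc with hσ
    obtain ⟨hint', heq'⟩ := perm_step σ hgS_meas hgS_int
    have hpt : ∀ q : (Fin (L + 2) → Ξ) × A,
        f ((q.1 ∘ σ) 0) q.2 * Real.log (mixDensity f (q.1 ∘ σ) q.2)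
          = f (q.1 k.castSucc) q.2 * Real.log (mixDensity f q.1 q.2) := by
      intro q
      have h1 : (q.1 ∘ σ) 0 = q.1 k.castSucc := by
        show q.1 (σ 0) = q.1 k.castSucc
        rw [hσ, Equiv.swap_apply_left]
      have h2 : mixDensity f (q.1 ∘ σ) q.2 = mixDensity f q.1 q.2 := by
        unfold mixDensity
        congr 1
        exact Equiv.sum_comp σ fun j => f (q.1 j) q.2
      rw [h1, h2]
    refine ⟨hint'.congr (ae_of_all _ hpt), ?_⟩
    calc ∫ q : (Fin (L + 2) → Ξ) × A,
            f (q.1 k.castSucc) q.2 * Real.log (mixDensity f q.1 q.2)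
            ∂((Measure.pi fun _ => μ).prod ν)
        = ∫ q : (Fin (L + 2) → Ξ) × A,
            f ((q.1 ∘ σ) 0) q.2 * Real.log (mixDensity f (q.1 ∘ σ) q.2)
            ∂((Measure.pi fun _ => μ).prod ν) :=
          integral_congr_ae (ae_of_all _ fun q => (hpt q).symm)
      _ = _ := heq'
  -- symmetry: truncated-mixture side
  have hsymC : ∀ k : Fin (L + 1),
      Integrable (fun q : (Fin (L + 2) → Ξ) × A =>
        f (q.1 k.castSucc) q.2 *
          Real.log (mixDensity f (fun ℓ : Fin (L + 1) => q.1 ℓ.castSucc) q.2))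
        ((Measure.pi fun _ => μ).prod ν) ∧
      ∫ q : (Fin (L + 2) → Ξ) × A,
          f (q.1 k.castSucc) q.2 *
            Real.log (mixDensity f (fun ℓ : Fin (L + 1) => q.1 ℓ.castSucc) q.2)
          ∂((Measure.pi fun _ => μ).prod ν)
        = ∫ q : (Fin (L + 2) → Ξ) × A,
          f (q.1 0) q.2 *
            Real.log (mixDensity f (fun ℓ : Fin (L + 1) => q.1 ℓ.castSucc) q.2)
          ∂((Measure.pi fun _ => μ).prod ν) := by
    intro k
    set σ : Equiv.Perm (Fin (L + 2)) :=
      Equiv.swap ((0 : Fin (L + 1)).castSucc) k.castSucc with hσ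
    obtain ⟨hint', heq'⟩ := perm_step σ hgLR_meas hgLR_int
    have hpt : ∀ q : (Fin (L + 2) → Ξ) × A,
        f ((q.1 ∘ σ) 0) q.2 *
            Real.log (mixDensity f (fun ℓ : Fin (L + 1) => (q.1 ∘ σ) ℓ.castSucc) q.2)
          = f (q.1 k.castSucc) q.2 *
            Real.log (mixDensity f (fun ℓ : Fin (L + 1) => q.1 ℓ.castSucc) q.2) := by
      intro q
      have h1 : (q.1 ∘ σ) 0 = q.1 k.castSucc := by
        show q.1 (σ 0) = q.1 k.castSucc
        rw [← Fin.castSucc_zero, hσ, Equiv.swap_apply_left]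
      have h2 : (fun ℓ : Fin (L + 1) => (q.1 ∘ σ) ℓ.castSucc)
          = fun ℓ : Fin (L + 1) => q.1 ((Equiv.swap 0 k ℓ).castSucc) := by
        funext ℓ
        show q.1 (σ ℓ.castSucc) = q.1 ((Equiv.swap 0 k ℓ).castSucc)
        rw [hσ, Function.Injective.swap_apply (Fin.castSucc_injective (L + 1))]
      have h3 : mixDensity f (fun ℓ : Fin (L + 1) => q.1 ((Equiv.swap 0 k ℓ).castSucc)) q.2
          = mixDensity f (fun ℓ : Fin (L + 1) => q.1 ℓ.castSucc) q.2 := by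
        unfold mixDensity
        congr 1
        exact Equiv.sum_comp (Equiv.swap 0 k) fun ℓ => f (q.1 ℓ.castSucc) q.2
      rw [h1, h2, h3]
    refine ⟨hint'.congr (ae_of_all _ hpt), ?_⟩
    calc ∫ q : (Fin (L + 2) → Ξ) × A,
            f (q.1 k.castSucc) q.2 *
              Real.log (mixDensity f (fun ℓ : Fin (L + 1) => q.1 ℓ.castSucc) q.2)
            ∂((Measure.pi fun _ => μ).prod ν)
        = ∫ q : (Fin (L + 2) → Ξ) × A,
            f ((q.1 ∘ σ) 0) q.2 *
              Real.log (mixDensity f (fun ℓ : Fin (L + 1) => (q.1 ∘ σ) ℓ.castSucc) q.2)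
            ∂((Measure.pi fun _ => μ).prod ν) :=
          integral_congr_ae (ae_of_all _ fun q => (hpt q).symm)
      _ = _ := heq'
  -- the H_{L+1} integrand, rewritten as an average
  have hrwF : (fun q : (Fin (L + 2) → Ξ) × A =>
      mixDensity f (fun ℓ : Fin (L + 1) => q.1 ℓ.castSucc) q.2 *
        Real.log (mixDensity f q.1 q.2))
      = fun q : (Fin (L + 2) → Ξ) × A => (1 / ((L : ℝ) + 1)) *
          ∑ k : Fin (L + 1), f (q.1 k.castSucc) q.2 * Real.log (mixDensity f q.1 q.2) := by
    funext q
    show ((1 / ((L : ℝ) + 1)) * ∑ k : Fin (L + 1), f (q.1 k.castSucc) q.2) *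
        Real.log (mixDensity f q.1 q.2) = _
    rw [mul_assoc, Finset.sum_mul]
  have hrwC : (fun q : (Fin (L + 2) → Ξ) × A =>
      mixDensity f (fun ℓ : Fin (L + 1) => q.1 ℓ.castSucc) q.2 *
        Real.log (mixDensity f (fun ℓ : Fin (L + 1) => q.1 ℓ.castSucc) q.2))
      = fun q : (Fin (L + 2) → Ξ) × A => (1 / ((L : ℝ) + 1)) *
          ∑ k : Fin (L + 1), f (q.1 k.castSucc) q.2 *
            Real.log (mixDensity f (fun ℓ : Fin (L + 1) => q.1 ℓ.castSucc) q.2) := by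
    funext q
    show ((1 / ((L : ℝ) + 1)) * ∑ k : Fin (L + 1), f (q.1 k.castSucc) q.2) *
        Real.log (mixDensity f (fun ℓ : Fin (L + 1) => q.1 ℓ.castSucc) q.2) = _
    rw [mul_assoc, Finset.sum_mul]
  -- integrability of the two combined integrands
  have hCF_int : Integrable (fun q : (Fin (L + 2) → Ξ) × A =>
      mixDensity f (fun ℓ : Fin (L + 1) => q.1 ℓ.castSucc) q.2 *
        Real.log (mixDensity f q.1 q.2)) ((Measure.pi fun _ => μ).prod ν) := by
    rw [hrwF]
    exact (integrable_finset_sum _ fun k _ => (hsymF k).1).const_mul _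
  have hCC_int : Integrable (fun q : (Fin (L + 2) → Ξ) × A =>
      mixDensity f (fun ℓ : Fin (L + 1) => q.1 ℓ.castSucc) q.2 *
        Real.log (mixDensity f (fun ℓ : Fin (L + 1) => q.1 ℓ.castSucc) q.2))
      ((Measure.pi fun _ => μ).prod ν) := by
    rw [hrwC]
    exact (integrable_finset_sum _ fun k _ => (hsymC k).1).const_mul _
  -- the two H values, expressed as joint integrals over Fin (L+2)
  have hCF_eq : ∫ q : (Fin (L + 2) → Ξ) × A,
      mixDensity f (fun ℓ : Fin (L + 1) => q.1 ℓ.castSucc) q.2 *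
        Real.log (mixDensity f q.1 q.2) ∂((Measure.pi fun _ => μ).prod ν)
      = semiImplicitH μ ν f (L + 1) := by
    have hH1 : semiImplicitH μ ν f (L + 1)
        = ∫ q : (Fin (L + 2) → Ξ) × A,
            f (q.1 0) q.2 * Real.log (mixDensity f q.1 q.2)
            ∂((Measure.pi fun _ => μ).prod ν) := by
      unfold semiImplicitH
      exact (integral_prod _ hgS_int).symm
    rw [hrwF, integral_const_mul, integral_finset_sum _ fun k _ => (hsymF k).1,
      Finset.sum_congr rfl fun k _ => (hsymF k).2, Finset.sum_const, Finset.card_univ,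
      Fintype.card_fin, nsmul_eq_mul, hH1]
    push_cast
    rw [← mul_assoc, one_div, inv_mul_cancel₀ hL1, one_mul]
  have hCC_eq : ∫ q : (Fin (L + 2) → Ξ) × A,
      mixDensity f (fun ℓ : Fin (L + 1) => q.1 ℓ.castSucc) q.2 *
        Real.log (mixDensity f (fun ℓ : Fin (L + 1) => q.1 ℓ.castSucc) q.2)
      ∂((Measure.pi fun _ => μ).prod ν)
      = semiImplicitH μ ν f L := by
    have hH0 : semiImplicitH μ ν f L
        = ∫ q : (Fin (L + 1) → Ξ) × A,
            f (q.1 0) q.2 * Real.log (mixDensity f q.1 q.2)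
            ∂((Measure.pi fun _ => μ).prod ν) := by
      unfold semiImplicitH
      exact (integral_prod _ hgL_int).symm
    rw [hrwC, integral_const_mul, integral_finset_sum _ fun k _ => (hsymC k).1,
      Finset.sum_congr rfl fun k _ => (hsymC k).2, Finset.sum_const, Finset.card_univ,
      Fintype.card_fin, nsmul_eq_mul, hgLR_eq, hH0]
    push_cast
    rw [← mul_assoc, one_div, inv_mul_cancel₀ hL1, one_mul]
  -- the KL integrand
  have hKL_meas : Measurable (fun q : (Fin (L + 2) → Ξ) × A =>
      mixDensity f (fun ℓ : Fin (L + 1) => q.1 ℓ.castSucc) q.2 *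
        Real.log (mixDensity f (fun ℓ : Fin (L + 1) => q.1 ℓ.castSucc) q.2 /
          mixDensity f q.1 q.2)) :=
    hmixC.mul (Real.measurable_log.comp (hmixC.div hmix2))
  have hKLint : Integrable (fun q : (Fin (L + 2) → Ξ) × A =>
      mixDensity f (fun ℓ : Fin (L + 1) => q.1 ℓ.castSucc) q.2 *
        Real.log (mixDensity f (fun ℓ : Fin (L + 1) => q.1 ℓ.castSucc) q.2 /
          mixDensity f q.1 q.2)) ((Measure.pi fun _ => μ).prod ν) :=
    integrable_of_abs hKL_meas.aestronglyMeasurable (hKL_int L) hmixC_nonneg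
  -- positivity of the mixtures
  have hpos : ∀ q : (Fin (L + 2) → Ξ) × A,
      mixDensity f (fun ℓ : Fin (L + 1) => q.1 ℓ.castSucc) q.2 ≠ 0 →
      0 < mixDensity f (fun ℓ : Fin (L + 1) => q.1 ℓ.castSucc) q.2 ∧
        0 < mixDensity f q.1 q.2 := by
    intro q h0
    have hC : 0 < mixDensity f (fun ℓ : Fin (L + 1) => q.1 ℓ.castSucc) q.2 :=
      lt_of_le_of_ne (hmixC_nonneg q) (Ne.symm h0)
    refine ⟨hC, ?_⟩
    have hS_nonneg : 0 ≤ ∑ ℓ : Fin (L + 1), f (q.1 ℓ.castSucc) q.2 :=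
      Finset.sum_nonneg fun ℓ _ => hf_nonneg _ _
    have hS_ne : (∑ ℓ : Fin (L + 1), f (q.1 ℓ.castSucc) q.2) ≠ 0 := by
      intro hS
      apply h0
      show (1 / ((L : ℝ) + 1)) * ∑ ℓ : Fin (L + 1), f (q.1 ℓ.castSucc) q.2 = 0
      rw [hS, mul_zero]
    have hS : 0 < ∑ ℓ : Fin (L + 1), f (q.1 ℓ.castSucc) q.2 :=
      lt_of_le_of_ne hS_nonneg (Ne.symm hS_ne)
    unfold mixDensity
    apply mul_pos (by positivity)
    rw [Fin.sum_univ_castSucc]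
    exact add_pos_of_pos_of_nonneg hS (hf_nonneg _ _)
  -- pointwise gap identity
  have hptKL : ∀ q : (Fin (L + 2) → Ξ) × A,
      mixDensity f (fun ℓ : Fin (L + 1) => q.1 ℓ.castSucc) q.2 *
          Real.log (mixDensity f (fun ℓ : Fin (L + 1) => q.1 ℓ.castSucc) q.2)
        - mixDensity f (fun ℓ : Fin (L + 1) => q.1 ℓ.castSucc) q.2 *
          Real.log (mixDensity f q.1 q.2)
        = mixDensity f (fun ℓ : Fin (L + 1) => q.1 ℓ.castSucc) q.2 *
          Real.log (mixDensity f (fun ℓ : Fin (L + 1) => q.1 ℓ.castSucc) q.2 /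
            mixDensity f q.1 q.2) := by
    intro q
    by_cases h0 : mixDensity f (fun ℓ : Fin (L + 1) => q.1 ℓ.castSucc) q.2 = 0
    · simp [h0]
    · obtain ⟨hC, hF⟩ := hpos q h0
      rw [Real.log_div h0 (ne_of_gt hF), mul_sub]
  -- gap identity
  have hgap : semiImplicitH μ ν f L - semiImplicitH μ ν f (L + 1)
      = ∫ q : (Fin (L + 2) → Ξ) × A,
          mixDensity f (fun ℓ : Fin (L + 1) => q.1 ℓ.castSucc) q.2 *
            Real.log (mixDensity f (fun ℓ : Fin (L + 1) => q.1 ℓ.castSucc) q.2 /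
              mixDensity f q.1 q.2) ∂((Measure.pi fun _ => μ).prod ν) := by
    rw [← hCC_eq, ← hCF_eq, ← integral_sub hCC_int hCF_int]
    exact integral_congr_ae (ae_of_all _ hptKL)
  -- integrability and integral-one of the two mixtures
  have hmixC_one : Integrable (fun q : (Fin (L + 2) → Ξ) × A =>
      mixDensity f (fun ℓ : Fin (L + 1) => q.1 ℓ.castSucc) q.2)
      ((Measure.pi fun _ => μ).prod ν) ∧
      ∫ q : (Fin (L + 2) → Ξ) × A,
        mixDensity f (fun ℓ : Fin (L + 1) => q.1 ℓ.castSucc) q.2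
        ∂((Measure.pi fun _ => μ).prod ν) = 1 := by
    have hrw : (fun q : (Fin (L + 2) → Ξ) × A =>
        mixDensity f (fun ℓ : Fin (L + 1) => q.1 ℓ.castSucc) q.2)
        = fun q : (Fin (L + 2) → Ξ) × A =>
            (1 / ((L : ℝ) + 1)) * ∑ k : Fin (L + 1), f (q.1 k.castSucc) q.2 := rfl
    constructor
    · rw [hrw]
      exact (integrable_finset_sum _ fun k _ =>
        (coord_int hf_nonneg hf_meas hf_dens (L + 2) k.castSucc).1).const_mul _
    · rw [hrw, integral_const_mul,
        integral_finset_sum _ fun k _ =>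
          (coord_int hf_nonneg hf_meas hf_dens (L + 2) k.castSucc).1,
        Finset.sum_congr rfl fun k _ =>
          (coord_int hf_nonneg hf_meas hf_dens (L + 2) k.castSucc).2,
        Finset.sum_const, Finset.card_univ, Fintype.card_fin, nsmul_eq_mul]
      push_cast
      rw [mul_one, one_div, inv_mul_cancel₀ hL1]
  have hmixF_one : Integrable (fun q : (Fin (L + 2) → Ξ) × A => mixDensity f q.1 q.2)
      ((Measure.pi fun _ => μ).prod ν) ∧
      ∫ q : (Fin (L + 2) → Ξ) × A, mixDensity f q.1 q.2
        ∂((Measure.pi fun _ => μ).prod ν) = 1 := by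
    have hrw : (fun q : (Fin (L + 2) → Ξ) × A => mixDensity f q.1 q.2)
        = fun q : (Fin (L + 2) → Ξ) × A =>
            (1 / (((L + 1 : ℕ) : ℝ) + 1)) * ∑ j : Fin (L + 2), f (q.1 j) q.2 := rfl
    have hL2 : (((L + 1 : ℕ) : ℝ) + 1) ≠ 0 := by positivity
    constructor
    · rw [hrw]
      exact (integrable_finset_sum _ fun j _ =>
        (coord_int hf_nonneg hf_meas hf_dens (L + 2) j).1).const_mul _
    · rw [hrw, integral_const_mul,
        integral_finset_sum _ fun j _ =>
          (coord_int hf_nonneg hf_meas hf_dens (L + 2) j).1,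
        Finset.sum_congr rfl fun j _ =>
          (coord_int hf_nonneg hf_meas hf_dens (L + 2) j).2,
        Finset.sum_const, Finset.card_univ, Fintype.card_fin, nsmul_eq_mul]
      rw [mul_one]
      have hc : ((L + 2 : ℕ) : ℝ) = ((L + 1 : ℕ) : ℝ) + 1 := by push_cast; ring
      rw [hc, one_div, inv_mul_cancel₀ hL2]
  -- pointwise lower bound by the Gibbs inequality
  have hge : ∀ q : (Fin (L + 2) → Ξ) × A,
      mixDensity f (fun ℓ : Fin (L + 1) => q.1 ℓ.castSucc) q.2 - mixDensity f q.1 q.2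
        ≤ mixDensity f (fun ℓ : Fin (L + 1) => q.1 ℓ.castSucc) q.2 *
          Real.log (mixDensity f (fun ℓ : Fin (L + 1) => q.1 ℓ.castSucc) q.2 /
            mixDensity f q.1 q.2) := by
    intro q
    by_cases h0 : mixDensity f (fun ℓ : Fin (L + 1) => q.1 ℓ.castSucc) q.2 = 0
    · have hFnn : 0 ≤ mixDensity f q.1 q.2 := mix_nonneg hf_nonneg _ _
      rw [h0]
      simpa using hFnn
    · obtain ⟨hC, hF⟩ := hpos q h0
      have h3 := Real.log_le_sub_one_of_pos (div_pos hF hC)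
      rw [Real.log_div (ne_of_gt hF) (ne_of_gt hC)] at h3
      have h4 := mul_le_mul_of_nonneg_left h3 hC.le
      have h5 : mixDensity f (fun ℓ : Fin (L + 1) => q.1 ℓ.castSucc) q.2 *
          (mixDensity f q.1 q.2 / mixDensity f (fun ℓ : Fin (L + 1) => q.1 ℓ.castSucc) q.2 - 1)
          = mixDensity f q.1 q.2 -
            mixDensity f (fun ℓ : Fin (L + 1) => q.1 ℓ.castSucc) q.2 := by
        field_simp
      rw [h5] at h4
      rw [mul_sub] at h4
      rw [Real.log_div h0 (ne_of_gt hF), mul_sub]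
      linarith
  -- nonnegativity of the KL term
  have hKL_nonneg : 0 ≤ ∫ q : (Fin (L + 2) → Ξ) × A,
      mixDensity f (fun ℓ : Fin (L + 1) => q.1 ℓ.castSucc) q.2 *
        Real.log (mixDensity f (fun ℓ : Fin (L + 1) => q.1 ℓ.castSucc) q.2 /
          mixDensity f q.1 q.2) ∂((Measure.pi fun _ => μ).prod ν) := by
    have hsub : Integrable (fun q : (Fin (L + 2) → Ξ) × A =>
        mixDensity f (fun ℓ : Fin (L + 1) => q.1 ℓ.castSucc) q.2 - mixDensity f q.1 q.2)
        ((Measure.pi fun _ => μ).prod ν) := hmixC_one.1.sub hmixF_one.1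
    have h := integral_mono hsub hKLint hge
    rw [integral_sub hmixC_one.1 hmixF_one.1, hmixC_one.2, hmixF_one.2] at h
    simpa using h
  constructor
  · rw [hgap]
    exact integral_prod _ hKLint
  · linarith [hgap, hKL_nonneg]
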